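/- (Theorem 3.5(iii)) Let the sequences (xᵏ, yᵏ, uᵏ, θ_k) be generated by the FPSA iteration, let m, M > 0 satisfy m ≤ f(Kxᵏ) ≤ M for all k, define ϖ(x,y,u) = φ(x,u)/(⟨Kx, y⟩ − f*(y)), and let θ̄ = lim_{k→∞} θ_k. Then ϖ(x̂, ŷ, û) = θ̄ for every accumulation point (x̂, ŷ, û) of the sequence (xᵏ, yᵏ, uᵏ). -/

import Mathlib

open Filter Metric Set RealInnerProductSpace
open scoped Topology Classical

noncomputable section

/-- Convexity for extended-real-valued functions. -/
def ERealConvex {α : Type*} [AddCommGroup α] [Module ℝ α] (f : α → EReal) : Prop :=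
  ∀ x y : α, ∀ a b : ℝ, 0 ≤ a → 0 ≤ b → a + b = 1 →
    f (a • x + b • y) ≤ (a : EReal) * f x + (b : EReal) * f y

/-- A proper extended-real-valued function: never `⊥` and finite somewhere. -/
def ERealProper {α : Type*} (f : α → EReal) : Prop :=
  (∀ x, f x ≠ ⊥) ∧ ∃ x, f x ≠ ⊤

/-- Effective domain of an extended-real-valued function. -/
def edom {α : Type*} (f : α → EReal) : Set α := {x | f x ≠ ⊤}

/-- Convex (Fenchel) conjugate. -/
def econj {α : Type*} [NormedAddCommGroup α] [InnerProductSpace ℝ α]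
    (f : α → EReal) (y : α) : EReal :=
  ⨆ z, (((⟪z, y⟫ : ℝ) : EReal) - f z)

/-- Convex subdifferential. -/
def csubdiff {α : Type*} [NormedAddCommGroup α] [InnerProductSpace ℝ α]
    (f : α → EReal) (z : α) : Set α :=
  {v | ∀ w, f z + ((⟪v, w - z⟫ : ℝ) : EReal) ≤ f w}

/-- Normal cone of a convex set. -/
def normalCone {α : Type*} [NormedAddCommGroup α] [InnerProductSpace ℝ α]
    (S : Set α) (x : α) : Set α :=
  {v | ∀ z ∈ S, ⟪v, z - x⟫ ≤ 0}

/-- Calmness of an extended-real-valued function at a point of its domain. -/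
def ECalm {α : Type*} [NormedAddCommGroup α] (f : α → EReal) (y : α) : Prop :=
  f y ≠ ⊤ ∧ ∃ ϱ > (0:ℝ), ∃ ε > (0:ℝ), ∀ y' ∈ Metric.ball y ε,
    f y - ((ϱ * ‖y' - y‖ : ℝ) : EReal) ≤ f y' ∧ f y' ≤ f y + ((ϱ * ‖y' - y‖ : ℝ) : EReal)

/-- Fréchet subdifferential of an extended-real-valued function of one variable. -/
def fsub {α : Type*} [NormedAddCommGroup α] [InnerProductSpace ℝ α]
    (f : α → EReal) (x : α) : Set α :=
  {v | 0 ≤ Filter.liminf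
      (fun z => (f z - f x - ((⟪v, z - x⟫ : ℝ) : EReal)) * (((‖z - x‖)⁻¹ : ℝ) : EReal))
      (𝓝[≠] x)}

/-- Fréchet subdifferential of a function of two (inner-product-space) variables. -/
def fsub2 {α β : Type*} [NormedAddCommGroup α] [InnerProductSpace ℝ α]
    [NormedAddCommGroup β] [InnerProductSpace ℝ β]
    (Φ : α → β → EReal) (a : α) (b : β) : Set (α × β) :=
  {v | 0 ≤ Filter.liminf
      (fun w : α × β =>
        (Φ w.1 w.2 - Φ a b - ((⟪v.1, w.1 - a⟫ + ⟪v.2, w.2 - b⟫ : ℝ) : EReal)) *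
          (((‖w - (a, b)‖)⁻¹ : ℝ) : EReal))
      (𝓝[≠] (a, b))}

/-- Limiting (Mordukhovich) subdifferential of a function of two variables. -/
def lsub2 {α β : Type*} [NormedAddCommGroup α] [InnerProductSpace ℝ α]
    [NormedAddCommGroup β] [InnerProductSpace ℝ β]
    (Φ : α → β → EReal) (a : α) (b : β) : Set (α × β) :=
  {v | ∃ w : ℕ → α × β, ∃ vs : ℕ → α × β,
      Tendsto w atTop (𝓝 (a, b)) ∧
      Tendsto (fun k => Φ (w k).1 (w k).2) atTop (𝓝 (Φ a b)) ∧
      (∀ k, vs k ∈ fsub2 Φ (w k).1 (w k).2) ∧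
      Tendsto vs atTop (𝓝 v)}

/-- Fréchet subdifferential of a function of three variables. -/
def fsub3 {α β γ : Type*} [NormedAddCommGroup α] [InnerProductSpace ℝ α]
    [NormedAddCommGroup β] [InnerProductSpace ℝ β]
    [NormedAddCommGroup γ] [InnerProductSpace ℝ γ]
    (Φ : α → β → γ → EReal) (a : α) (b : β) (c : γ) : Set (α × β × γ) :=
  {v | 0 ≤ Filter.liminf
      (fun w : α × β × γ =>
        (Φ w.1 w.2.1 w.2.2 - Φ a b c -
          ((⟪v.1, w.1 - a⟫ + ⟪v.2.1, w.2.1 - b⟫ + ⟪v.2.2, w.2.2 - c⟫ : ℝ) : EReal)) *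
          (((‖w - (a, b, c)‖)⁻¹ : ℝ) : EReal))
      (𝓝[≠] (a, b, c))}

/-- Limiting (Mordukhovich) subdifferential of a function of three variables. -/
def lsub3 {α β γ : Type*} [NormedAddCommGroup α] [InnerProductSpace ℝ α]
    [NormedAddCommGroup β] [InnerProductSpace ℝ β]
    [NormedAddCommGroup γ] [InnerProductSpace ℝ γ]
    (Φ : α → β → γ → EReal) (a : α) (b : β) (c : γ) : Set (α × β × γ) :=
  {v | ∃ w : ℕ → α × β × γ, ∃ vs : ℕ → α × β × γ,
      Tendsto w atTop (𝓝 (a, b, c)) ∧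
      Tendsto (fun k => Φ (w k).1 (w k).2.1 (w k).2.2) atTop (𝓝 (Φ a b c)) ∧
      (∀ k, vs k ∈ fsub3 Φ (w k).1 (w k).2.1 (w k).2.2) ∧
      Tendsto vs atTop (𝓝 v)}

/-- A polyhedral set: a finite intersection of closed half-spaces. -/
def IsPolyhedral {α : Type*} [NormedAddCommGroup α] [InnerProductSpace ℝ α]
    (S : Set α) : Prop :=
  ∃ (m : ℕ) (a : Fin m → α) (b : Fin m → ℝ), S = {z | ∀ i, ⟪a i, z⟫ ≤ b i}

/-- The merit function φ(x,u) = g(x) + h(x) + ι_S(x) + (1/(2δ))‖x-u‖². -/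
def phiF {n : ℕ} (S : Set (EuclideanSpace ℝ (Fin n)))
    (g : EuclideanSpace ℝ (Fin n) → EReal) (h : EuclideanSpace ℝ (Fin n) → ℝ) (δ : ℝ)
    (x u : EuclideanSpace ℝ (Fin n)) : EReal :=
  g x + ((h x : ℝ) : EReal) + (if x ∈ S then (0 : EReal) else ⊤)
    + (((2 * δ)⁻¹ * ‖x - u‖ ^ 2 : ℝ) : EReal)

/-- ϑ(x,u) = φ(x,u)/f(Kx). -/
def varthetaF {n p : ℕ} (S : Set (EuclideanSpace ℝ (Fin n)))
    (g : EuclideanSpace ℝ (Fin n) → EReal) (h : EuclideanSpace ℝ (Fin n) → ℝ)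
    (f : EuclideanSpace ℝ (Fin p) → EReal)
    (K : EuclideanSpace ℝ (Fin n) →ₗ[ℝ] EuclideanSpace ℝ (Fin p)) (δ : ℝ)
    (x u : EuclideanSpace ℝ (Fin n)) : EReal :=
  phiF S g h δ x u / f (K x)

/-- ϖ(x,y,u) = φ(x,u)/(⟨Kx,y⟩ - f*(y)). -/
def varpiF {n p : ℕ} (S : Set (EuclideanSpace ℝ (Fin n)))
    (g : EuclideanSpace ℝ (Fin n) → EReal) (h : EuclideanSpace ℝ (Fin n) → ℝ)
    (f : EuclideanSpace ℝ (Fin p) → EReal)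
    (K : EuclideanSpace ℝ (Fin n) →ₗ[ℝ] EuclideanSpace ℝ (Fin p)) (δ : ℝ)
    (x : EuclideanSpace ℝ (Fin n)) (y : EuclideanSpace ℝ (Fin p))
    (u : EuclideanSpace ℝ (Fin n)) : EReal :=
  phiF S g h δ x u / (((⟪K x, y⟫ : ℝ) : EReal) - econj f y)


/-!
One FPSA step combines three inequalities: the three-point inequality of the (strongly convex)
proximal subproblem, the descent lemma for `h`, and the subgradient inequality for `f` at `Kxᵏ`.
Together with `θ_k f(Kxᵏ) = φ(xᵏ, uᵏ)` they give the sufficient decrease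
`(1/(2δ) - L/2) ‖xᵏ⁺¹ - xᵏ‖² ≤ (θ_k - θ_{k+1}) f(Kxᵏ⁺¹)`, so consecutive iterates merge because
`θ_k` converges and `f(Kxᵏ) ≤ M`. Along a convergent subsequence the preceding iterates therefore
have the same limit, and closedness of the graph of `∂f` gives `ŷ ∈ ∂f(Kx̂)`; by the Fenchel–Young
equality this turns `ϖ(x̂, ŷ, û)` into `ϑ(x̂, û)`. Finally lower semicontinuity of `g` and the
minimality of the proximal step force `g(xᵏ) → g(x̂)` along the subsequence, so
`θ_k = ϑ(xᵏ, uᵏ)` passes to the limit: `ϑ(x̂, û) = θ̄`.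
-/

section ExtendedRealConvex

variable {α : Type*}

theorem ERealConvex.convexOn_toReal [AddCommGroup α] [Module ℝ α] {f : α → EReal}
    (hf : ERealConvex f) (hbot : ∀ x, f x ≠ ⊥) : ConvexOn ℝ (edom f) fun x => (f x).toReal := by
  have hle : ∀ x ∈ edom f, ∀ y ∈ edom f, ∀ a b : ℝ, 0 ≤ a → 0 ≤ b → a + b = 1 →
      f (a • x + b • y) ≤ ((a * (f x).toReal + b * (f y).toReal : ℝ) : EReal) := by
    intro x hx y hy a b ha hb hab
    rw [EReal.coe_add, EReal.coe_mul, EReal.coe_mul, EReal.coe_toReal hx (hbot x),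
      EReal.coe_toReal hy (hbot y)]
    exact hf x y a b ha hb hab
  have hdom : Convex ℝ (edom f) := fun x hx y hy a b ha hb hab =>
    ne_top_of_le_ne_top (EReal.coe_ne_top _) (hle x hx y hy a b ha hb hab)
  refine ⟨hdom, fun x hx y hy a b ha hb hab => ?_⟩
  simpa only [smul_eq_mul, EReal.toReal_coe] using
    EReal.toReal_le_toReal (hle x hx y hy a b ha hb hab) (hbot _) (EReal.coe_ne_top _)

theorem ERealConvex.continuousOn_interior_edom [NormedAddCommGroup α] [NormedSpace ℝ α]
    [FiniteDimensional ℝ α] {f : α → EReal} (hf : ERealConvex f) (hbot : ∀ x, f x ≠ ⊥) :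
    ContinuousOn f (interior (edom f)) :=
  (continuous_coe_real_ereal.comp_continuousOn
    (hf.convexOn_toReal hbot).continuousOn_interior).congr fun x hx =>
      (EReal.coe_toReal (interior_subset hx) (hbot x)).symm

variable [NormedAddCommGroup α] [InnerProductSpace ℝ α] {f : α → EReal}

theorem econj_eq_of_mem_csubdiff {z v : α} (hv : v ∈ csubdiff f z) :
    econj f v = ((⟪z, v⟫ : ℝ) : EReal) - f z := by
  refine le_antisymm (iSup_le fun w => ?_) (le_iSup (fun w => ((⟪w, v⟫ : ℝ) : EReal) - f w) z)
  have hvw := hv w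
  rw [inner_sub_right, real_inner_comm w v, real_inner_comm z v] at hvw
  induction hfz : f z using EReal.rec with
  | bot => simp
  | top =>
    rw [hfz, EReal.top_add_coe, top_le_iff] at hvw
    simp [hvw]
  | coe a =>
    induction hfw : f w using EReal.rec with
    | bot =>
      rw [hfz, hfw, ← EReal.coe_add, le_bot_iff] at hvw
      exact absurd hvw (EReal.coe_ne_bot _)
    | top => simp
    | coe b =>
      rw [hfz, hfw, ← EReal.coe_add, EReal.coe_le_coe_iff] at hvw
      rw [← EReal.coe_sub, ← EReal.coe_sub, EReal.coe_le_coe_iff]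
      linarith

theorem mem_csubdiff_of_tendsto {ι : Type*} {l : Filter ι} [l.NeBot] {z v : ι → α} {z₀ v₀ : α}
    (hz : Tendsto z l (𝓝 z₀)) (hv : Tendsto v l (𝓝 v₀))
    (hfz : Tendsto (fun i => f (z i)) l (𝓝 (f z₀)))
    (hsub : ∀ᶠ i in l, v i ∈ csubdiff f (z i)) : v₀ ∈ csubdiff f z₀ := by
  intro w
  have hinner : Tendsto (fun i => ((⟪v i, w - z i⟫ : ℝ) : EReal)) l
      (𝓝 ((⟪v₀, w - z₀⟫ : ℝ) : EReal)) :=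
    (continuous_coe_real_ereal.tendsto _).comp (hv.inner (tendsto_const_nhds.sub hz))
  have hsum := ((EReal.continuousAt_add (p := (f z₀, _)) (.inr (EReal.coe_ne_bot _))
    (.inr (EReal.coe_ne_top _))).tendsto.comp (hfz.prodMk_nhds hinner))
  exact le_of_tendsto hsum (hsub.mono fun i hi => hi w)

end ExtendedRealConvex

section ProxGradient

variable {E : Type*} [NormedAddCommGroup E] [InnerProductSpace ℝ E]

theorem le_add_inner_add_sq_of_lipschitz_gradient [CompleteSpace E] {O : Set E} {h : E → ℝ}
    {gh : E → E} {L : ℝ} (hgrad : ∀ z ∈ O, HasGradientAt h (gh z) z)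
    (hlip : ∀ z ∈ O, ∀ w ∈ O, ‖gh z - gh w‖ ≤ L * ‖z - w‖) {x z : E} (hseg : segment ℝ x z ⊆ O) :
    h z ≤ h x + ⟪gh x, z - x⟫ + L / 2 * ‖z - x‖ ^ 2 := by
  set v := z - x
  set γ : ℝ → E := fun t => x + t • v
  have hγO : ∀ t ∈ Icc (0 : ℝ) 1, γ t ∈ O := fun t ht =>
    hseg (segment_eq_image' ℝ x z ▸ mem_image_of_mem _ ht)
  set ψ : ℝ → ℝ := fun t => h (γ t) - t * ⟪gh x, v⟫ - L / 2 * ‖v‖ ^ 2 * t ^ 2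
  have hψ : ∀ t ∈ Icc (0 : ℝ) 1, HasDerivAt ψ (⟪gh (γ t) - gh x, v⟫ - L * ‖v‖ ^ 2 * t) t := by
    intro t ht
    have hγ : HasDerivAt γ v t :=
      (((hasDerivAt_id t).smul_const v).const_add x).congr_deriv (one_smul ℝ v)
    have hhγ := (hgrad _ (hγO t ht)).hasFDerivAt.comp_hasDerivAt t hγ
    refine ((hhγ.sub ((hasDerivAt_id t).mul_const ⟪gh x, v⟫)).sub
      ((hasDerivAt_pow 2 t).const_mul (L / 2 * ‖v‖ ^ 2))).congr_deriv ?_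
    simp only [InnerProductSpace.toDual_apply_apply, inner_sub_left]
    push_cast
    ring
  have hanti : AntitoneOn ψ (Icc 0 1) := by
    refine antitoneOn_of_hasDerivWithinAt_nonpos (convex_Icc 0 1)
      (fun t ht => (hψ t ht).continuousAt.continuousWithinAt)
      (fun t ht => (hψ t (interior_subset ht)).hasDerivWithinAt) fun t ht => ?_
    rw [interior_Icc] at ht
    have hgt : ‖gh (γ t) - gh x‖ ≤ L * (t * ‖v‖) := by
      simpa [γ, norm_smul, abs_of_pos ht.1] using
        hlip _ (hγO t (Ioo_subset_Icc_self ht)) x (by simpa [γ] using hγO 0 (by simp))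
    linarith [real_inner_le_norm (gh (γ t) - gh x) v,
      mul_le_mul_of_nonneg_right hgt (norm_nonneg v)]
  have h01 := hanti (left_mem_Icc.2 zero_le_one) (right_mem_Icc.2 zero_le_one) zero_le_one
  simp only [ψ, γ, v, zero_smul, add_zero, one_smul, add_sub_cancel] at h01
  linarith

theorem ConvexOn.strongConvexOn_add_sq {D : Set E} {G : E → ℝ} (hG : ConvexOn ℝ D G) (q : ℝ)
    (c : E) : StrongConvexOn D (2 * q) fun z => G z + q * ‖z - c‖ ^ 2 := by
  rw [strongConvexOn_iff_convex]
  refine ((hG.add (((-2 * q) • innerₗ E c).convexOn hG.1)).add_const (q * ‖c‖ ^ 2)).congr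
    fun z _ => ?_
  simp only [Pi.add_apply, LinearMap.smul_apply, innerₗ_apply_apply, smul_eq_mul,
    norm_sub_sq_real, real_inner_comm c z]
  ring

theorem StrongConvexOn.add_sq_le_of_isMinOn {s : Set E} {F : E → ℝ} {m : ℝ} {x y : E}
    (hF : StrongConvexOn s m F) (hmin : IsMinOn F s x) (hx : x ∈ s) (hy : y ∈ s) :
    F x + m / 2 * ‖y - x‖ ^ 2 ≤ F y := by
  have hlim : Tendsto (fun t : ℝ => F x + (1 - t) * (m / 2 * ‖y - x‖ ^ 2)) (𝓝[>] 0)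
      (𝓝 (F x + m / 2 * ‖y - x‖ ^ 2)) := by
    have hcont : Continuous fun t : ℝ => F x + (1 - t) * (m / 2 * ‖y - x‖ ^ 2) := by fun_prop
    simpa using hcont.continuousWithinAt.tendsto (x := 0) (s := Ioi 0)
  refine le_of_tendsto hlim ?_
  filter_upwards [Ioo_mem_nhdsGT zero_lt_one] with t ht
  have hmem := hF.1 hy hx ht.1.le (sub_pos.2 ht.2).le (by ring)
  have hconv := hF.2 hy hx ht.1.le (sub_pos.2 ht.2).le (by ring)
  have hle := hmin hmem
  simp only [smul_eq_mul, mem_ofPred_eq] at hconv hle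
  refine le_of_mul_le_mul_left ?_ ht.1
  linarith

theorem ConvexOn.prox_gradient_step_le {D : Set E} {G : E → ℝ} (hG : ConvexOn ℝ D G) {δ : ℝ}
    (hδ : 0 < δ) {u v x₀ x₁ : E}
    (hmin : IsMinOn (fun z => G z + (2 * δ)⁻¹ * ‖z - (u - δ • v)‖ ^ 2) D x₁) (hx₀ : x₀ ∈ D)
    (hx₁ : x₁ ∈ D) :
    G x₁ + ⟪v, x₁ - x₀⟫ + (2 * δ)⁻¹ * ‖x₁ - u‖ ^ 2 + (2 * δ)⁻¹ * ‖x₁ - x₀‖ ^ 2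
      ≤ G x₀ + (2 * δ)⁻¹ * ‖x₀ - u‖ ^ 2 := by
  have hgrowth := (hG.strongConvexOn_add_sq _ (u - δ • v)).add_sq_le_of_isMinOn hmin hx₁ hx₀
  have hexpand : ∀ z, (2 * δ)⁻¹ * ‖z - (u - δ • v)‖ ^ 2
      = (2 * δ)⁻¹ * ‖z - u‖ ^ 2 + ⟪v, z - u⟫ + δ / 2 * ‖v‖ ^ 2 := by
    intro z
    rw [show z - (u - δ • v) = (z - u) + δ • v by abel, norm_add_sq_real, real_inner_smul_right,
      norm_smul, Real.norm_of_nonneg hδ.le, real_inner_comm]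
    field_simp
  have hinner : ⟪v, x₁ - x₀⟫ = ⟪v, x₁ - u⟫ - ⟪v, x₀ - u⟫ := by
    rw [← inner_sub_right, sub_sub_sub_cancel_right]
  rw [hexpand, hexpand, norm_sub_rev x₀] at hgrowth
  linarith

end ProxGradient

section Sequences

theorem StrictMono.exists_add_one_eq {φ : ℕ → ℕ} (hφ : StrictMono φ) :
    ∃ ψ : ℕ → ℕ, Tendsto ψ atTop atTop ∧ ∀ j, ψ j + 1 = φ (j + 1) :=
  ⟨fun j => φ (j + 1) - 1,
    tendsto_atTop_mono (fun j => Nat.le_sub_one_of_lt ((Nat.lt_succ_self j).trans_le (hφ.id_le _)))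
      tendsto_id,
    fun j => Nat.sub_add_cancel ((Nat.le_add_left 1 j).trans (hφ.id_le _))⟩

theorem exists_norm_le_of_relaxation {E : Type*} [SeminormedAddCommGroup E] [NormedSpace ℝ E]
    {σ R : ℝ} (hσ : 0 < σ) (hσ2 : σ < 2) {x u : ℕ → E} (hx : ∀ k, ‖x k‖ ≤ R)
    (hu : ∀ k, u (k + 1) = (1 - σ) • u k + σ • x (k + 1)) : ∃ C, ∀ k, ‖u k‖ ≤ C := by
  have hρ : |1 - σ| < 1 := abs_lt.2 ⟨by linarith, by linarith⟩
  refine ⟨max ‖u 0‖ (σ * R / (1 - |1 - σ|)), fun k => ?_⟩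
  induction k with
  | zero => exact le_max_left _ _
  | succ k ih =>
    have hstep : ‖u (k + 1)‖ ≤ |1 - σ| * ‖u k‖ + σ * R := by
      rw [hu k]
      refine (norm_add_le _ _).trans ?_
      rw [norm_smul, norm_smul, Real.norm_eq_abs, Real.norm_of_nonneg hσ.le]
      gcongr
      exact hx _
    have hR : σ * R ≤ (1 - |1 - σ|) * max ‖u 0‖ (σ * R / (1 - |1 - σ|)) :=
      (div_le_iff₀' (sub_pos.2 hρ)).1 (le_max_right _ _)
    linarith [mul_le_mul_of_nonneg_left ih (abs_nonneg (1 - σ))]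

theorem tendsto_sub_succ_of_mul_sq_le {E : Type*} [SeminormedAddCommGroup E] {x : ℕ → E}
    {θ b : ℕ → ℝ} {a M θ' : ℝ} (ha : 0 < a) (hb : ∀ k, |b k| ≤ M)
    (hθ : Tendsto θ atTop (𝓝 θ'))
    (hdec : ∀ k, a * ‖x (k + 1) - x k‖ ^ 2 ≤ (θ k - θ (k + 1)) * b (k + 1)) :
    Tendsto (fun k => x (k + 1) - x k) atTop (𝓝 0) := by
  have hgap : Tendsto (fun k => √(|θ k - θ (k + 1)| * M / a)) atTop (𝓝 0) := by
    simpa using (((hθ.sub (hθ.comp (tendsto_add_atTop_nat 1))).abs.mul_const M).div_const a).sqrt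
  refine tendsto_zero_iff_norm_tendsto_zero.2
    (squeeze_zero (fun _ => norm_nonneg _) (fun k => Real.le_sqrt_of_sq_le ?_) hgap)
  rw [le_div_iff₀ ha]
  calc ‖x (k + 1) - x k‖ ^ 2 * a ≤ (θ k - θ (k + 1)) * b (k + 1) := by linarith [hdec k]
    _ ≤ |θ k - θ (k + 1)| * M := (le_abs_self _).trans
      ((abs_mul _ _).trans_le (mul_le_mul_of_nonneg_left (hb _) (abs_nonneg _)))

theorem LowerSemicontinuous.tendsto_of_le_add {X ι : Type*} [TopologicalSpace X] {l : Filter ι}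
    {g : X → EReal} (hg : LowerSemicontinuous g) {x : ι → X} {x₀ : X} {r : ι → ℝ}
    (hx : Tendsto x l (𝓝 x₀)) (hr : Tendsto r l (𝓝 0)) (hle : ∀ᶠ i in l, g (x i) ≤ g x₀ + r i) :
    Tendsto (fun i => g (x i)) l (𝓝 (g x₀)) := by
  have hup : Tendsto (fun i => g x₀ + (r i : EReal)) l (𝓝 (g x₀)) := by
    have hsum := (EReal.continuousAt_add (p := (g x₀, ((0 : ℝ) : EReal)))
      (.inr (EReal.coe_ne_bot _)) (.inr (EReal.coe_ne_top _))).tendsto.comp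
        (tendsto_const_nhds.prodMk_nhds ((continuous_coe_real_ereal.tendsto 0).comp hr))
    rwa [EReal.coe_zero, add_zero] at hsum
  refine tendsto_order.2 ⟨fun a ha => hx.eventually (hg x₀ a ha), fun a ha => ?_⟩
  filter_upwards [hle, (tendsto_order.1 hup).2 a ha] with i h₁ h₂ using h₁.trans_lt h₂

theorem LowerSemicontinuous.tendsto_of_prox {E ι : Type*} [NormedAddCommGroup E]
    [InnerProductSpace ℝ E] {g : E → EReal} (hg : LowerSemicontinuous g) {l : Filter ι}
    {x c : ι → E} {x₀ : E} {q : ℝ} (hx : Tendsto x l (𝓝 x₀))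
    (hc : IsBoundedUnder (· ≤ ·) l fun i => ‖c i‖)
    (hmin : ∀ᶠ i in l, g (x i) + ((q * ‖x i - c i‖ ^ 2 : ℝ) : EReal)
      ≤ g x₀ + ((q * ‖x₀ - c i‖ ^ 2 : ℝ) : EReal)) :
    Tendsto (fun i => g (x i)) l (𝓝 (g x₀)) := by
  have hgap : Tendsto (fun i => ⟪x₀ - x i, (x₀ - c i) + (x i - c i)⟫) l (𝓝 0) := by
    have hx₀ : Tendsto (fun i => x₀ - x i) l (𝓝 0) := by
      simpa using (tendsto_const_nhds (x := x₀)).sub hx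
    obtain ⟨C, hC⟩ := hc
    obtain ⟨D, hD⟩ := hx.norm.isBoundedUnder_le
    refine hx₀.op_zero_isBoundedUnder_le (isBoundedUnder_of_eventually_le (a := ‖x₀‖ + D + 2 * C)
      ?_) (fun a b => ⟪a, b⟫) fun a b => by simpa using abs_real_inner_le_norm a b
    filter_upwards [eventually_map.1 hC, eventually_map.1 hD] with i hCi hDi
    have := norm_add_le (x₀ - c i) (x i - c i)
    have := norm_sub_le x₀ (c i)
    have := norm_sub_le (x i) (c i)
    simp only [Function.comp]
    linarith
  refine hg.tendsto_of_le_add hx (r := fun i => q * ⟪x₀ - x i, (x₀ - c i) + (x i - c i)⟫)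
    (by simpa using hgap.const_mul q) (hmin.mono fun i hi => ?_)
  have hsq : q * ⟪x₀ - x i, (x₀ - c i) + (x i - c i)⟫
      = q * ‖x₀ - c i‖ ^ 2 - q * ‖x i - c i‖ ^ 2 := by
    rw [show x₀ - x i = (x₀ - c i) - (x i - c i) by abel, inner_sub_left, inner_add_right,
      inner_add_right, real_inner_self_eq_norm_sq, real_inner_self_eq_norm_sq,
      real_inner_comm (x i - c i)]
    ring
  calc g (x i) = g (x i) + ((q * ‖x i - c i‖ ^ 2 : ℝ) : EReal)
        + ((-(q * ‖x i - c i‖ ^ 2) : ℝ) : EReal) := by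
          rw [add_assoc, ← EReal.coe_add, add_neg_cancel, EReal.coe_zero, add_zero]
    _ ≤ g x₀ + ((q * ‖x₀ - c i‖ ^ 2 : ℝ) : EReal) + ((-(q * ‖x i - c i‖ ^ 2) : ℝ) : EReal) := by
          gcongr
    _ = _ := by rw [add_assoc, ← EReal.coe_add, ← sub_eq_add_neg, hsq]

end Sequences

section FPSA

variable {n p : ℕ} {S : Set (EuclideanSpace ℝ (Fin n))} {g : EuclideanSpace ℝ (Fin n) → EReal}
  {h : EuclideanSpace ℝ (Fin n) → ℝ} {f : EuclideanSpace ℝ (Fin p) → EReal}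
  {K : EuclideanSpace ℝ (Fin n) →ₗ[ℝ] EuclideanSpace ℝ (Fin p)} {δ : ℝ}

theorem phiF_eq_coe {x u : EuclideanSpace ℝ (Fin n)} {a : ℝ} (hx : x ∈ S) (hgx : g x = a) :
    phiF S g h δ x u = ((a + h x + (2 * δ)⁻¹ * ‖x - u‖ ^ 2 : ℝ) : EReal) := by
  rw [phiF, hgx, if_pos hx, add_zero]
  norm_cast

theorem varpiF_eq_varthetaF {x u : EuclideanSpace ℝ (Fin n)} {y : EuclideanSpace ℝ (Fin p)}
    (hy : y ∈ csubdiff f (K x)) (hftop : f (K x) ≠ ⊤) (hfbot : f (K x) ≠ ⊥) :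
    varpiF S g h f K δ x y u = varthetaF S g h f K δ x u := by
  rw [varpiF, varthetaF, econj_eq_of_mem_csubdiff hy, ← EReal.coe_toReal hftop hfbot,
    ← EReal.coe_sub, ← EReal.coe_sub, sub_sub_cancel]

theorem mul_toReal_eq_of_coe_eq_varthetaF {x u : EuclideanSpace ℝ (Fin n)} {θ : ℝ}
    (hx : x ∈ S ∧ g x ≠ ⊤) (hgbot : g x ≠ ⊥) (hfpos : 0 < f (K x)) (hftop : f (K x) ≠ ⊤)
    (hθ : (θ : EReal) = varthetaF S g h f K δ x u) :
    θ * (f (K x)).toReal = (g x).toReal + h x + (2 * δ)⁻¹ * ‖x - u‖ ^ 2 := by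
  rw [varthetaF, phiF_eq_coe hx.1 (EReal.coe_toReal hx.2 hgbot).symm,
    ← EReal.coe_toReal hftop (ne_bot_of_gt hfpos), ← EReal.coe_div, EReal.coe_eq_coe_iff] at hθ
  rw [hθ, div_mul_cancel₀ _ (EReal.toReal_pos hfpos hftop).ne']

theorem fpsa_step_decrease {O : Set (EuclideanSpace ℝ (Fin n))}
    {gh : EuclideanSpace ℝ (Fin n) → EuclideanSpace ℝ (Fin n)} {L σ θ₀ θ₁ : ℝ}
    {x₀ x₁ u₀ u₁ : EuclideanSpace ℝ (Fin n)} {y : EuclideanSpace ℝ (Fin p)}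
    (hSconv : Convex ℝ S) (hgconv : ERealConvex g) (hgbot : ∀ z, g z ≠ ⊥) (hSO : S ⊆ O)
    (hgrad : ∀ z ∈ O, HasGradientAt h (gh z) z)
    (hlip : ∀ z ∈ O, ∀ w ∈ O, ‖gh z - gh w‖ ≤ L * ‖z - w‖)
    (hfpos : ∀ z ∈ S, 0 < f (K z)) (hftop : ∀ z ∈ S, f (K z) ≠ ⊤)
    (hδ : 0 < δ) (hσ : 0 < σ) (hσ2 : σ < 2) (hθ₀nn : 0 ≤ θ₀)
    (hx₀ : x₀ ∈ S ∧ g x₀ ≠ ⊤) (hx₁ : x₁ ∈ S ∧ g x₁ ≠ ⊤) (hy : y ∈ csubdiff f (K x₀))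
    (hmin : ∀ w ∈ S,
      g x₁ + (((2*δ)⁻¹ * ‖x₁ - u₀ + δ • gh x₀ - (θ₀ * δ) • (LinearMap.adjoint K) y‖ ^ 2 : ℝ)
          : EReal)
        ≤ g w + (((2*δ)⁻¹ * ‖w - u₀ + δ • gh x₀ - (θ₀ * δ) • (LinearMap.adjoint K) y‖ ^ 2 : ℝ)
          : EReal))
    (hu : u₁ = (1 - σ) • u₀ + σ • x₁)
    (hθ₀ : (θ₀ : EReal) = varthetaF S g h f K δ x₀ u₀)
    (hθ₁ : (θ₁ : EReal) = varthetaF S g h f K δ x₁ u₁) :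
    ((2 * δ)⁻¹ - L / 2) * ‖x₁ - x₀‖ ^ 2 ≤ (θ₀ - θ₁) * (f (K x₁)).toReal := by
  set v := gh x₀ - θ₀ • LinearMap.adjoint K y
  have hG : ConvexOn ℝ (S ∩ edom g) fun z => (g z).toReal :=
    (hgconv.convexOn_toReal hgbot).subset inter_subset_right
      (hSconv.inter (hgconv.convexOn_toReal hgbot).1)
  have hprox :
      IsMinOn (fun z => (g z).toReal + (2 * δ)⁻¹ * ‖z - (u₀ - δ • v)‖ ^ 2) (S ∩ edom g) x₁ := by
    refine isMinOn_iff.2 fun w hw => ?_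
    have hw' := hmin w hw.1
    rw [← EReal.coe_toReal hx₁.2 (hgbot _), ← EReal.coe_toReal hw.2 (hgbot _), ← EReal.coe_add,
      ← EReal.coe_add, EReal.coe_le_coe_iff] at hw'
    have hshift : ∀ z, z - u₀ + δ • gh x₀ - (θ₀ * δ) • LinearMap.adjoint K y = z - (u₀ - δ • v) :=
      fun z => by simp only [v]; module
    simpa only [hshift] using hw'
  have hproxgrad := hG.prox_gradient_step_le hδ hprox hx₀ hx₁
  have hv : ⟪v, x₁ - x₀⟫ = ⟪gh x₀, x₁ - x₀⟫ - θ₀ * ⟪y, K x₁ - K x₀⟫ := by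
    rw [inner_sub_left, real_inner_smul_left, LinearMap.adjoint_inner_left, map_sub]
  have hdesc := le_add_inner_add_sq_of_lipschitz_gradient hgrad hlip
    ((hSconv.segment_subset hx₀.1 hx₁.1).trans hSO)
  have hsub : (f (K x₀)).toReal + ⟪y, K x₁ - K x₀⟫ ≤ (f (K x₁)).toReal := by
    have := hy (K x₁)
    rwa [← EReal.coe_toReal (hftop _ hx₀.1) (ne_bot_of_gt (hfpos _ hx₀.1)),
      ← EReal.coe_toReal (hftop _ hx₁.1) (ne_bot_of_gt (hfpos _ hx₁.1)), ← EReal.coe_add,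
      EReal.coe_le_coe_iff] at this
  have hrelax : (2 * δ)⁻¹ * ‖x₁ - u₁‖ ^ 2 ≤ (2 * δ)⁻¹ * ‖x₁ - u₀‖ ^ 2 := by
    have hsq : (1 - σ) ^ 2 ≤ 1 := by nlinarith
    rw [show x₁ - u₁ = (1 - σ) • (x₁ - u₀) by rw [hu]; module, norm_smul, Real.norm_eq_abs, mul_pow,
      sq_abs]
    gcongr
    exact mul_le_of_le_one_left (by positivity) hsq
  have hΦ₀ := mul_toReal_eq_of_coe_eq_varthetaF hx₀ (hgbot _) (hfpos _ hx₀.1) (hftop _ hx₀.1) hθ₀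
  have hΦ₁ := mul_toReal_eq_of_coe_eq_varthetaF hx₁ (hgbot _) (hfpos _ hx₁.1) (hftop _ hx₁.1) hθ₁
  have hθsub := mul_le_mul_of_nonneg_left
    (show ⟪y, K x₁ - K x₀⟫ ≤ (f (K x₁)).toReal - (f (K x₀)).toReal by linarith) hθ₀nn
  linarith

theorem fpsa_tendsto_sub_succ {O : Set (EuclideanSpace ℝ (Fin n))}
    {gh : EuclideanSpace ℝ (Fin n) → EuclideanSpace ℝ (Fin n)} {L σ M θbar : ℝ}
    {x u : ℕ → EuclideanSpace ℝ (Fin n)} {y : ℕ → EuclideanSpace ℝ (Fin p)} {θ : ℕ → ℝ}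
    (hSconv : Convex ℝ S) (hgconv : ERealConvex g) (hgbot : ∀ z, g z ≠ ⊥) (hSO : S ⊆ O)
    (hgrad : ∀ z ∈ O, HasGradientAt h (gh z) z)
    (hlip : ∀ z ∈ O, ∀ w ∈ O, ‖gh z - gh w‖ ≤ L * ‖z - w‖)
    (hfpos : ∀ z ∈ S, 0 < f (K z)) (hftop : ∀ z ∈ S, f (K z) ≠ ⊤)
    (hL : 0 < L) (hδ : 0 < δ) (hδL : δ < 1 / L) (hσ : 0 < σ) (hσ2 : σ < 2)
    (hxS : ∀ k, x k ∈ S ∧ g (x k) ≠ ⊤)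
    (hy : ∀ k, y (k+1) ∈ csubdiff f (K (x k)))
    (hxmin : ∀ k, ∀ w ∈ S,
      g (x (k+1)) + (((2*δ)⁻¹ * ‖x (k+1) - u k + δ • gh (x k)
          - (θ k * δ) • (LinearMap.adjoint K) (y (k+1))‖ ^ 2 : ℝ) : EReal)
        ≤ g w + (((2*δ)⁻¹ * ‖w - u k + δ • gh (x k)
          - (θ k * δ) • (LinearMap.adjoint K) (y (k+1))‖ ^ 2 : ℝ) : EReal))
    (hu : ∀ k, u (k+1) = (1 - σ) • u k + σ • x (k+1))
    (hθ : ∀ k, (θ k : EReal) = varthetaF S g h f K δ (x k) (u k)) (hθnn : ∀ k, 0 ≤ θ k)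
    (hfM : ∀ k, f (K (x k)) ≤ (M : EReal)) (hθlim : Tendsto θ atTop (𝓝 θbar)) :
    Tendsto (fun k => x (k + 1) - x k) atTop (𝓝 0) := by
  refine tendsto_sub_succ_of_mul_sq_le (b := fun k => (f (K (x k))).toReal) (M := M) ?_
    (fun k => ?_) hθlim fun k =>
      fpsa_step_decrease hSconv hgconv hgbot hSO hgrad hlip hfpos hftop hδ hσ hσ2 (hθnn k) (hxS k)
        (hxS (k + 1)) (hy k) (hxmin k) (hu k) (hθ k) (hθ (k + 1))
  · have := (lt_div_iff₀ hL).1 hδL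
    rw [sub_pos, ← one_div, lt_div_iff₀ (by positivity)]
    linarith
  · refine (abs_of_pos (EReal.toReal_pos (hfpos _ (hxS k).1) (hftop _ (hxS k).1))).trans_le ?_
    simpa using EReal.toReal_le_toReal (hfM k) (ne_bot_of_gt (hfpos _ (hxS k).1))
      (EReal.coe_ne_top M)

theorem fpsa_tendsto_g {O : Set (EuclideanSpace ℝ (Fin n))}
    {gh : EuclideanSpace ℝ (Fin n) → EuclideanSpace ℝ (Fin n)} {L σ R θ' : ℝ}
    {x u : ℕ → EuclideanSpace ℝ (Fin n)} {y : ℕ → EuclideanSpace ℝ (Fin p)} {θ : ℕ → ℝ}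
    {ψ : ℕ → ℕ} {xh : EuclideanSpace ℝ (Fin n)} {yh : EuclideanSpace ℝ (Fin p)}
    (hglsc : LowerSemicontinuous g) (hSO : S ⊆ O)
    (hlip : ∀ z ∈ O, ∀ w ∈ O, ‖gh z - gh w‖ ≤ L * ‖z - w‖) (hσ : 0 < σ) (hσ2 : σ < 2)
    (hxS : ∀ k, x k ∈ S) (hxR : ∀ k, ‖x k‖ ≤ R) (hxh : xh ∈ S)
    (hxmin : ∀ k, ∀ w ∈ S,
      g (x (k+1)) + (((2*δ)⁻¹ * ‖x (k+1) - u k + δ • gh (x k)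
          - (θ k * δ) • (LinearMap.adjoint K) (y (k+1))‖ ^ 2 : ℝ) : EReal)
        ≤ g w + (((2*δ)⁻¹ * ‖w - u k + δ • gh (x k)
          - (θ k * δ) • (LinearMap.adjoint K) (y (k+1))‖ ^ 2 : ℝ) : EReal))
    (hu : ∀ k, u (k+1) = (1 - σ) • u k + σ • x (k+1)) (hθ : Tendsto θ atTop (𝓝 θ'))
    (hψ : Tendsto ψ atTop atTop) (hx : Tendsto (fun j => x (ψ j + 1)) atTop (𝓝 xh))
    (hxprev : Tendsto (fun j => x (ψ j)) atTop (𝓝 xh))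
    (hy : Tendsto (fun j => y (ψ j + 1)) atTop (𝓝 yh)) :
    Tendsto (fun j => g (x (ψ j + 1))) atTop (𝓝 (g xh)) := by
  obtain ⟨C, hC⟩ := exists_norm_le_of_relaxation hσ hσ2 hxR hu
  set w := fun j => δ • gh (x (ψ j)) - (θ (ψ j) * δ) • LinearMap.adjoint K (y (ψ j + 1))
  have hgh : Tendsto (fun j => gh (x (ψ j))) atTop (𝓝 (gh xh)) :=
    tendsto_iff_norm_sub_tendsto_zero.2 (squeeze_zero (fun _ => norm_nonneg _)
      (fun j => hlip _ (hSO (hxS _)) _ (hSO hxh))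
      (by simpa using (tendsto_iff_norm_sub_tendsto_zero.1 hxprev).const_mul L))
  have hw : Tendsto w atTop (𝓝 (δ • gh xh - (θ' * δ) • LinearMap.adjoint K yh)) :=
    (hgh.const_smul δ).sub (((hθ.comp hψ).mul_const δ).smul
      (((LinearMap.adjoint K).continuous_of_finiteDimensional.tendsto _).comp hy))
  refine hglsc.tendsto_of_prox hx (c := fun j => u (ψ j) - w j) (q := (2 * δ)⁻¹) ?_
    (.of_forall fun j => ?_)
  · exact (isBoundedUnder_le_add (isBoundedUnder_of ⟨C, fun j => hC (ψ j)⟩)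
      hw.norm.isBoundedUnder_le).mono_le (.of_forall fun j => norm_sub_le _ _)
  · have hcenter : ∀ z, z - u (ψ j) + δ • gh (x (ψ j))
        - (θ (ψ j) * δ) • LinearMap.adjoint K (y (ψ j + 1)) = z - (u (ψ j) - w j) :=
      fun z => by simp only [w]; abel
    simpa only [hcenter] using hxmin (ψ j) xh hxh

theorem varthetaF_eq_of_tendsto {ι : Type*} {l : Filter ι} [l.NeBot]
    {x u : ι → EuclideanSpace ℝ (Fin n)} {xh uh : EuclideanSpace ℝ (Fin n)} {θ : ι → ℝ} {θ' : ℝ}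
    (hgbot : ∀ z, g z ≠ ⊥) (hfpos : ∀ z ∈ S, 0 < f (K z)) (hftop : ∀ z ∈ S, f (K z) ≠ ⊤)
    (hxS : ∀ i, x i ∈ S ∧ g (x i) ≠ ⊤) (hxh : xh ∈ S) (hx : Tendsto x l (𝓝 xh))
    (hu : Tendsto u l (𝓝 uh)) (hθ' : Tendsto θ l (𝓝 θ'))
    (hg : Tendsto (fun i => g (x i)) l (𝓝 (g xh))) (hh : ContinuousAt h xh)
    (hfK : ContinuousAt (fun z => f (K z)) xh)
    (hθ : ∀ i, (θ i : EReal) = varthetaF S g h f K δ (x i) (u i)) :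
    varthetaF S g h f K δ xh uh = θ' := by
  set b := (f (K xh)).toReal
  have hF : Tendsto (fun i => (f (K (x i))).toReal) l (𝓝 b) :=
    (EReal.tendsto_toReal (hftop _ hxh) (ne_bot_of_gt (hfpos _ hxh))).comp (hfK.tendsto.comp hx)
  have hgxh : g xh = ((θ' * b - h xh - (2 * δ)⁻¹ * ‖xh - uh‖ ^ 2 : ℝ) : EReal) := by
    refine tendsto_nhds_unique hg (((continuous_coe_real_ereal.tendsto _).comp
      (((hθ'.mul hF).sub (hh.tendsto.comp hx)).sub
        (((hx.sub hu).norm.pow 2).const_mul (2 * δ)⁻¹))).congr fun i => ?_)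
    have hΦ := mul_toReal_eq_of_coe_eq_varthetaF (hxS i) (hgbot _) (hfpos _ (hxS i).1)
      (hftop _ (hxS i).1) (hθ i)
    simp only [Function.comp_apply]
    rw [← EReal.coe_toReal (hxS i).2 (hgbot _), EReal.coe_eq_coe_iff]
    linarith
  rw [varthetaF, phiF_eq_coe hxh hgxh,
    ← EReal.coe_toReal (hftop _ hxh) (ne_bot_of_gt (hfpos _ hxh)), ← EReal.coe_div,
    EReal.coe_eq_coe_iff]
  field_simp [(EReal.toReal_pos (hfpos _ hxh) (hftop _ hxh)).ne']
  ring

end FPSA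

theorem stmt13_general {n p : ℕ}
    (S : Set (EuclideanSpace ℝ (Fin n)))
    (g : EuclideanSpace ℝ (Fin n) → EReal)
    (h : EuclideanSpace ℝ (Fin n) → ℝ)
    (gh : EuclideanSpace ℝ (Fin n) → EuclideanSpace ℝ (Fin n))
    (f : EuclideanSpace ℝ (Fin p) → EReal)
    (K : EuclideanSpace ℝ (Fin n) →ₗ[ℝ] EuclideanSpace ℝ (Fin p))
    (L δ : ℝ)
    (hSconv : Convex ℝ S) (hScomp : IsCompact S)
    (hgP : ERealProper g) (hgconv : ERealConvex g) (hglsc : LowerSemicontinuous g)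
    (hfP : ERealProper f) (hfconv : ERealConvex f)
    (hL : 0 < L)
    (hhC1 : ∃ O : Set (EuclideanSpace ℝ (Fin n)), IsOpen O ∧ S ⊆ O ∧
      (∀ z ∈ O, HasGradientAt h (gh z) z) ∧
      (∀ z ∈ O, ∀ w ∈ O, ‖gh z - gh w‖ ≤ L * ‖z - w‖))
    (hKS : ∀ z ∈ S, K z ∈ interior (edom f))
    (hfpos : ∀ z ∈ S, (0 : EReal) < f (K z))
    (hδ : 0 < δ) (hδL : δ < 1 / L)
    (σ : ℝ) (hσ : 0 < σ) (hσ2 : σ < 2)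
    (x u : ℕ → EuclideanSpace ℝ (Fin n)) (y : ℕ → EuclideanSpace ℝ (Fin p)) (θ : ℕ → ℝ)
    (hxS : ∀ k, x k ∈ S ∧ g (x k) ≠ ⊤)
    (hy : ∀ k, y (k+1) ∈ csubdiff f (K (x k)))
    (hxmin : ∀ k, ∀ w ∈ S,
      g (x (k+1)) + (((2*δ)⁻¹ * ‖x (k+1) - u k + δ • gh (x k)
          - (θ k * δ) • (LinearMap.adjoint K) (y (k+1))‖ ^ 2 : ℝ) : EReal)
        ≤ g w + (((2*δ)⁻¹ * ‖w - u k + δ • gh (x k)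
          - (θ k * δ) • (LinearMap.adjoint K) (y (k+1))‖ ^ 2 : ℝ) : EReal))
    (hu : ∀ k, u (k+1) = (1 - σ) • u k + σ • x (k+1))
    (hθ : ∀ k, (θ k : EReal) = varthetaF S g h f K δ (x k) (u k))
    (hθnn : ∀ k, 0 ≤ θ k)
    (m M : ℝ)
    (hmM : ∀ k, (m : EReal) ≤ f (K (x k)) ∧ f (K (x k)) ≤ (M : EReal))
    (θbar : ℝ) (hθlim : Tendsto θ atTop (𝓝 θbar))
    :
    ∀ (xh : EuclideanSpace ℝ (Fin n)) (yh : EuclideanSpace ℝ (Fin p))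
        (uh : EuclideanSpace ℝ (Fin n)),
      (∃ φ : ℕ → ℕ, StrictMono φ ∧
          Tendsto (fun j => (x (φ j), y (φ j), u (φ j))) atTop (𝓝 (xh, yh, uh))) →
      varpiF S g h f K δ xh yh uh = ((θbar : ℝ) : EReal) := by
  intro xh yh uh ⟨φ, hφ, hlim⟩
  obtain ⟨O, -, hSO, hgrad, hlip⟩ := hhC1
  have hftop : ∀ z ∈ S, f (K z) ≠ ⊤ := fun z hz => interior_subset (hKS z hz)
  have hstep := fpsa_tendsto_sub_succ hSconv hgconv hgP.1 hSO hgrad hlip hfpos hftop hL hδ hδL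
    hσ hσ2 hxS hy hxmin hu hθ hθnn (fun k => (hmM k).2) hθlim
  obtain ⟨ψ, hψ, hψφ⟩ := hφ.exists_add_one_eq
  have hlim' : Tendsto (fun j => (x (ψ j + 1), y (ψ j + 1), u (ψ j + 1))) atTop
      (𝓝 (xh, yh, uh)) := by
    simpa only [hψφ, Function.comp_def] using hlim.comp (tendsto_add_atTop_nat 1)
  have hx := hlim'.fst_nhds
  have hy' := hlim'.snd_nhds.fst_nhds
  have hxh : xh ∈ S := hScomp.isClosed.mem_of_tendsto hx (.of_forall fun j => (hxS _).1)
  have hxprev : Tendsto (fun j => x (ψ j)) atTop (𝓝 xh) := by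
    simpa using hx.sub (hstep.comp hψ)
  have hKc := K.continuous_of_finiteDimensional
  have hfK : ContinuousAt (fun z => f (K z)) xh :=
    ((hfconv.continuousOn_interior_edom hfP.1).continuousAt
      (isOpen_interior.mem_nhds (hKS xh hxh))).comp hKc.continuousAt
  have hyh : yh ∈ csubdiff f (K xh) := mem_csubdiff_of_tendsto ((hKc.tendsto _).comp hxprev) hy'
    (hfK.tendsto.comp hxprev) (.of_forall fun j => hy (ψ j))
  obtain ⟨R, hR⟩ := hScomp.isBounded.exists_norm_le
  have hg := fpsa_tendsto_g hglsc hSO hlip hσ hσ2 (fun k => (hxS k).1) (fun k => hR _ (hxS k).1)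
    hxh hxmin hu hθlim hψ hx hxprev hy'
  rw [varpiF_eq_varthetaF hyh (hftop _ hxh) (ne_bot_of_gt (hfpos _ hxh))]
  exact varthetaF_eq_of_tendsto hgP.1 hfpos hftop (fun j => hxS _) hxh hx hlim'.snd_nhds.snd_nhds
    (hθlim.comp ((tendsto_add_atTop_nat 1).comp hψ)) hg
    (hgrad xh (hSO hxh)).differentiableAt.continuousAt hfK fun j => hθ _

theorem stmt13 {n p : ℕ}
    (S : Set (EuclideanSpace ℝ (Fin n)))
    (g : EuclideanSpace ℝ (Fin n) → EReal)
    (h : EuclideanSpace ℝ (Fin n) → ℝ)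
    (gh : EuclideanSpace ℝ (Fin n) → EuclideanSpace ℝ (Fin n))
    (f : EuclideanSpace ℝ (Fin p) → EReal)
    (K : EuclideanSpace ℝ (Fin n) →ₗ[ℝ] EuclideanSpace ℝ (Fin p))
    (L δ : ℝ)
    (hS : S.Nonempty) (hSconv : Convex ℝ S) (hScomp : IsCompact S)
    (hgP : ERealProper g) (hgconv : ERealConvex g) (hglsc : LowerSemicontinuous g)
    (hfP : ERealProper f) (hfconv : ERealConvex f) (hflsc : LowerSemicontinuous f)
    (hL : 0 < L)
    (hhC1 : ∃ O : Set (EuclideanSpace ℝ (Fin n)), IsOpen O ∧ S ⊆ O ∧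
      (∀ z ∈ O, HasGradientAt h (gh z) z) ∧
      (∀ z ∈ O, ∀ w ∈ O, ‖gh z - gh w‖ ≤ L * ‖z - w‖))
    (hKS : ∀ z ∈ S, K z ∈ interior (edom f))
    (hfpos : ∀ z ∈ S, (0 : EReal) < f (K z))
    (hghnn : ∀ z ∈ S, (0 : EReal) ≤ g z + ((h z : ℝ) : EReal))
    (hSg : ∃ z ∈ S, g z ≠ ⊤)
    (hδ : 0 < δ) (hδL : δ < 1 / L)
    (σ : ℝ) (hσ : 0 < σ) (hσ2 : σ < 2)
    (x u : ℕ → EuclideanSpace ℝ (Fin n)) (y : ℕ → EuclideanSpace ℝ (Fin p)) (θ : ℕ → ℝ)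
    (hxS : ∀ k, x k ∈ S ∧ g (x k) ≠ ⊤)
    (hy : ∀ k, y (k+1) ∈ csubdiff f (K (x k)))
    (hxmin : ∀ k, ∀ w ∈ S,
      g (x (k+1)) + (((2*δ)⁻¹ * ‖x (k+1) - u k + δ • gh (x k)
          - (θ k * δ) • (LinearMap.adjoint K) (y (k+1))‖ ^ 2 : ℝ) : EReal)
        ≤ g w + (((2*δ)⁻¹ * ‖w - u k + δ • gh (x k)
          - (θ k * δ) • (LinearMap.adjoint K) (y (k+1))‖ ^ 2 : ℝ) : EReal))
    (hu : ∀ k, u (k+1) = (1 - σ) • u k + σ • x (k+1))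
    (hθ : ∀ k, (θ k : EReal) = varthetaF S g h f K δ (x k) (u k))
    (hθnn : ∀ k, 0 ≤ θ k)
    (m M : ℝ) (hm : 0 < m)
    (hmM : ∀ k, (m : EReal) ≤ f (K (x k)) ∧ f (K (x k)) ≤ (M : EReal))
    (θbar : ℝ) (hθlim : Tendsto θ atTop (𝓝 θbar))
    :
    ∀ (xh : EuclideanSpace ℝ (Fin n)) (yh : EuclideanSpace ℝ (Fin p))
        (uh : EuclideanSpace ℝ (Fin n)),
      (∃ φ : ℕ → ℕ, StrictMono φ ∧
          Tendsto (fun j => (x (φ j), y (φ j), u (φ j))) atTop (𝓝 (xh, yh, uh))) →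
      varpiF S g h f K δ xh yh uh = ((θbar : ℝ) : EReal) :=
  stmt13_general S g h gh f K L δ hSconv hScomp hgP hgconv hglsc hfP hfconv hL hhC1 hKS hfpos hδ hδL
    σ hσ hσ2 x u y θ hxS hy hxmin hu hθ hθnn m M hmM θbar hθlim
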